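/- arXiv:1405.5076 — 6 statements merged into one kernel-verified Lean document; each statement's English description precedes it below -/
import Mathlib

section
/- Let F be a concave function from an open convex set U in a normed linear space into the bounded self-adjoint operators on a Hilbert space (with the operator order). If F is bounded from below (by a scalar multiple of the identity) on a neighborhood of one point of U, then F is locally bounded (above and below by scalar multiples of the identity) at every point of U. -/
/-!
Concavity propagates a lower bound from the ball `B(a, r)` to a ball around any `x ∈ U`:
for `w ∈ U` just beyond `x` on the ray from `a`, the homothety with centre `w` and some
ratio `s ∈ (0, 1)` maps `B(a, r)` onto `B(x, s r)`, and on this image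
`F ≥ s M + (1 - s) F(w)`. An upper bound on a ball around `x` then comes from
`F(y) ≤ 2 F(x) - F(2x - y)`. Both bounds are operators, and since these are self-adjoint they
are in turn dominated by `± ‖·‖` times the identity.
-/

open Metric Set

section ConcaveOn

variable {V β : Type*} [NormedAddCommGroup V] [NormedSpace ℝ V]
  [AddCommGroup β] [PartialOrder β] [IsOrderedAddMonoid β] [Module ℝ β] [PosSMulMono ℝ β]
  {U : Set V} {f : V → β}

lemma exists_mem_ball_eq_homothety {a w y : V} {r s : ℝ} (hs : 0 < s)
    (hy : y ∈ ball (s • a + (1 - s) • w) (s * r)) :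
    ∃ u ∈ ball a r, y = s • u + (1 - s) • w := by
  refine ⟨a + s⁻¹ • (y - (s • a + (1 - s) • w)), ?_, ?_⟩
  · rw [mem_ball, dist_eq_norm] at hy ⊢
    rw [add_sub_cancel_left, norm_smul, Real.norm_eq_abs, abs_inv, abs_of_pos hs,
      inv_mul_lt_iff₀ hs]
    exact hy
  · rw [smul_add, smul_inv_smul₀ hs.ne']
    abel

lemma IsOpen.exists_eq_homothety_of_mem (hU : IsOpen U) {x : V} (hx : x ∈ U) (a : V) :
    ∃ s ∈ Ioo (0 : ℝ) 1, ∃ w ∈ U, x = s • a + (1 - s) • w := by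
  have hcont : Continuous fun t : ℝ ↦ a + t • (x - a) := by fun_prop
  have hmem : (fun t : ℝ ↦ a + t • (x - a)) ⁻¹' U ∈ nhds 1 :=
    hcont.continuousAt.preimage_mem_nhds (by simpa using hU.mem_nhds hx)
  obtain ⟨u, hu, hIco⟩ := exists_Ico_subset_of_mem_nhds hmem ⟨2, one_lt_two⟩
  obtain ⟨t, ht, htu⟩ := exists_between hu
  refine ⟨1 - t⁻¹, ⟨by simp [inv_lt_one_of_one_lt₀ ht], by simp [zero_lt_one.trans ht]⟩,
    a + t • (x - a), hIco ⟨ht.le, htu⟩, ?_⟩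
  rw [sub_sub_cancel, smul_add, smul_smul, inv_mul_cancel₀ (by positivity)]
  module

lemma ConcaveOn.exists_ball_bddBelow (hf : ConcaveOn ℝ U f) (hU : IsOpen U) {a : V} {r : ℝ}
    (hr : 0 < r) (hball : ball a r ⊆ U) (hbdd : BddBelow (f '' ball a r)) {x : V} (hx : x ∈ U) :
    ∃ ρ > 0, ball x ρ ⊆ U ∧ BddBelow (f '' ball x ρ) := by
  obtain ⟨s, ⟨hs0, hs1⟩, w, hw, rfl⟩ := hU.exists_eq_homothety_of_mem hx a
  obtain ⟨c, hc⟩ := hbdd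
  refine ⟨s * r, by positivity, ?_, s • c + (1 - s) • f w, ?_⟩
  · intro y hy
    obtain ⟨u, hu, rfl⟩ := exists_mem_ball_eq_homothety hs0 hy
    exact hf.1 (hball hu) hw hs0.le (by linarith) (by ring)
  · rintro _ ⟨y, hy, rfl⟩
    obtain ⟨u, hu, rfl⟩ := exists_mem_ball_eq_homothety hs0 hy
    calc s • c + (1 - s) • f w ≤ s • f u + (1 - s) • f w := by
          gcongr
          exact hc (mem_image_of_mem f hu)
      _ ≤ f (s • u + (1 - s) • w) :=
          hf.2 (hball hu) hw hs0.le (by linarith) (by ring)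

lemma ConcaveOn.bddAbove_of_bddBelow_ball (hf : ConcaveOn ℝ U f) {x : V} {ρ : ℝ}
    (hball : ball x ρ ⊆ U) (hbdd : BddBelow (f '' ball x ρ)) :
    BddAbove (f '' ball x ρ) := by
  obtain ⟨b, hb⟩ := hbdd
  refine ⟨(2 : ℝ) • f x - b, ?_⟩
  rintro _ ⟨y, hy, rfl⟩
  set y' := (2 : ℝ) • x - y
  have hy' : y' ∈ ball x ρ := by
    rw [mem_ball, dist_eq_norm] at hy ⊢
    rwa [show y' - x = -(y - x) by module, norm_neg]
  have hmid : f y + f y' ≤ (2 : ℝ) • f x := by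
    have h := hf.2 (hball hy) (hball hy') (by norm_num : (0 : ℝ) ≤ 1 / 2)
      (by norm_num : (0 : ℝ) ≤ 1 / 2) (by norm_num)
    rw [show (1 / 2 : ℝ) • y + (1 / 2 : ℝ) • y' = x by module, ← smul_add] at h
    simpa [smul_smul] using smul_le_smul_of_nonneg_left h (zero_le_two (α := ℝ))
  have := hb (mem_image_of_mem f hy')
  calc f y ≤ (2 : ℝ) • f x - f y' := le_sub_iff_add_le.mpr hmid
    _ ≤ (2 : ℝ) • f x - b := by gcongr

end ConcaveOn

section CStarAlgebra

variable {A : Type*} [CStarAlgebra A] [PartialOrder A] [StarOrderedRing A] {S : Set A} {a : A}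

lemma BddBelow.exists_algebraMap_le (hS : BddBelow S) (ha : a ∈ S) (ha' : IsSelfAdjoint a) :
    ∃ m : ℝ, ∀ b ∈ S, algebraMap ℝ A m ≤ b := by
  obtain ⟨c, hc⟩ := hS
  have hc' : IsSelfAdjoint c := by
    simpa using ha'.sub (IsSelfAdjoint.of_nonneg (sub_nonneg.mpr (hc ha)))
  exact ⟨-‖c‖, fun b hb ↦ by simpa using hc'.neg_algebraMap_norm_le_self.trans (hc hb)⟩

lemma BddAbove.exists_le_algebraMap (hS : BddAbove S) (ha : a ∈ S) (ha' : IsSelfAdjoint a) :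
    ∃ M : ℝ, ∀ b ∈ S, b ≤ algebraMap ℝ A M := by
  obtain ⟨c, hc⟩ := hS
  have hc' : IsSelfAdjoint c := by
    simpa using ha'.add (IsSelfAdjoint.of_nonneg (sub_nonneg.mpr (hc ha)))
  exact ⟨‖c‖, fun b hb ↦ (hc hb).trans hc'.le_algebraMap_norm_self⟩

end CStarAlgebra

theorem concave_locally_bounded_general
    {V : Type*} [NormedAddCommGroup V] [NormedSpace ℝ V]
    {E : Type*} [NormedAddCommGroup E] [InnerProductSpace ℂ E] [CompleteSpace E]
    (U : Set V) (hUopen : IsOpen U) (hUconv : Convex ℝ U)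
    (F : V → (E →L[ℂ] E))
    (hsa : ∀ x ∈ U, IsSelfAdjoint (F x))
    (hconc : ∀ x ∈ U, ∀ y ∈ U, ∀ l : ℝ, 0 ≤ l → l ≤ 1 →
      (F ((1 - l) • x + l • y) - ((1 - l) • F x + l • F y)).IsPositive)
    (a : V) (r : ℝ) (hr : 0 < r) (hball : ball a r ⊆ U)
    (M : ℝ) (hbelow : ∀ x ∈ ball a r, (F x - M • (1 : E →L[ℂ] E)).IsPositive) :
    ∀ x ∈ U, ∃ ρ > 0, ball x ρ ⊆ U ∧ ∃ m M' : ℝ, ∀ y ∈ ball x ρ,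
      (F y - m • (1 : E →L[ℂ] E)).IsPositive ∧
      (M' • (1 : E →L[ℂ] E) - F y).IsPositive := by
  intro x hx
  have hF : ConcaveOn ℝ U F := ⟨hUconv, fun u hu v hv s t hs ht hst ↦ by
    obtain rfl : s = 1 - t := by linarith
    exact hconc u hu v hv t ht (by linarith)⟩
  have hbddBelow : BddBelow (F '' ball a r) := ⟨M • 1, by rintro _ ⟨u, hu, rfl⟩; exact hbelow u hu⟩
  obtain ⟨ρ, hρ, hsub, hlow⟩ := hF.exists_ball_bddBelow hUopen hr hball hbddBelow hx
  have hFx : F x ∈ F '' ball x ρ := mem_image_of_mem F (mem_ball_self hρ)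
  obtain ⟨m, hm⟩ := hlow.exists_algebraMap_le hFx (hsa x hx)
  obtain ⟨M', hM'⟩ := (hF.bddAbove_of_bddBelow_ball hsub hlow).exists_le_algebraMap hFx (hsa x hx)
  refine ⟨ρ, hρ, hsub, m, M', fun y hy ↦ ⟨?_, ?_⟩⟩
  · rw [← ContinuousLinearMap.le_def, ← Algebra.algebraMap_eq_smul_one]
    exact hm _ (mem_image_of_mem F hy)
  · rw [← ContinuousLinearMap.le_def, ← Algebra.algebraMap_eq_smul_one]
    exact hM' _ (mem_image_of_mem F hy)

/-- A concave function from an open convex subset `U` of a normed linear space into the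
self-adjoint operators on a Hilbert space which is bounded below (by a scalar multiple of
the identity) near one point of `U` is locally bounded, above and below by scalar multiples
of the identity, at every point of `U`. -/
theorem concave_locally_bounded
    {V : Type*} [NormedAddCommGroup V] [NormedSpace ℝ V]
    {E : Type*} [NormedAddCommGroup E] [InnerProductSpace ℂ E] [CompleteSpace E]
    (U : Set V) (hUopen : IsOpen U) (hUconv : Convex ℝ U)
    (F : V → (E →L[ℂ] E))
    (hsa : ∀ x ∈ U, IsSelfAdjoint (F x))
    (hconc : ∀ x ∈ U, ∀ y ∈ U, ∀ l : ℝ, 0 ≤ l → l ≤ 1 →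
      (F ((1 - l) • x + l • y) - ((1 - l) • F x + l • F y)).IsPositive)
    (a : V) (ha : a ∈ U) (r : ℝ) (hr : 0 < r) (hball : ball a r ⊆ U)
    (M : ℝ) (hbelow : ∀ x ∈ ball a r, (F x - M • (1 : E →L[ℂ] E)).IsPositive) :
    ∀ x ∈ U, ∃ ρ > 0, ball x ρ ⊆ U ∧ ∃ m M' : ℝ, ∀ y ∈ ball x ρ,
      (F y - m • (1 : E →L[ℂ] E)).IsPositive ∧
      (M' • (1 : E →L[ℂ] E) - F y).IsPositive :=
  concave_locally_bounded_general U hUopen hUconv F hsa hconc a r hr hball M hbelow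
end

section
/- An operator concave function F from an open convex subset of the k-fold product of bounded self-adjoint operators into the self-adjoint operators, which is locally bounded from below, is locally Lipschitz continuous in the operator norm; in particular it is norm continuous. -/
/-!
Testing against vectors reduces everything to scalars: for each `x : E`, the function
`Y ↦ re ⟪F Y x, x⟫` is real concave and, near a point, bounded below by `M * ‖x‖ ^ 2`.
Concavity at the midpoint of `Y` and its reflection through the centre of the ball turns this
into a two-sided bound of order `‖x‖ ^ 2`, and a bounded concave function on a ball is Lipschitz
on a smaller ball with constant linear in the bound. The norm of the self-adjoint operator
`F Y - F Z` is the supremum of its Rayleigh quotients, so the scalar estimates, uniform after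
dividing by `‖x‖ ^ 2`, give the operator one.
-/

open Metric

section Scalar

variable {V : Type*} [NormedAddCommGroup V] [NormedSpace ℝ V] {f : V → ℝ} {x₀ y : V} {r m : ℝ}

lemma ConcaveOn.abs_le_of_forall_le (hf : ConcaveOn ℝ (ball x₀ r) f)
    (hm : ∀ y ∈ ball x₀ r, m ≤ f y) (hy : y ∈ ball x₀ r) : |f y| ≤ 2 * |f x₀| + |m| := by
  have hy' : x₀ + (x₀ - y) ∈ ball x₀ r := by
    rwa [mem_ball, dist_eq_norm, add_sub_cancel_left, ← dist_eq_norm']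
  have hmid : f y + f (x₀ + (x₀ - y)) ≤ 2 * f x₀ := by
    have h := hf.2 hy hy' (by norm_num : (0 : ℝ) ≤ 1 / 2) (by norm_num : (0 : ℝ) ≤ 1 / 2)
      (add_halves 1)
    rw [show (1 / 2 : ℝ) • y + (1 / 2 : ℝ) • (x₀ + (x₀ - y)) = x₀ by module, smul_eq_mul,
      smul_eq_mul] at h
    linarith
  rw [abs_le]
  constructor
  · linarith [hm y hy, neg_abs_le m, abs_nonneg (f x₀)]
  · linarith [hm _ hy', le_abs_self (f x₀), neg_abs_le m]

end Scalar

namespace ContinuousLinearMap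

variable {𝕜 : Type*} [RCLike 𝕜] {E : Type*} [NormedAddCommGroup E] [InnerProductSpace 𝕜 E]

lemma reApplyInnerSelf_add (S T : E →L[𝕜] E) (x : E) :
    (S + T).reApplyInnerSelf x = S.reApplyInnerSelf x + T.reApplyInnerSelf x := by
  simp [reApplyInnerSelf_apply, inner_add_left]

lemma reApplyInnerSelf_sub (S T : E →L[𝕜] E) (x : E) :
    (S - T).reApplyInnerSelf x = S.reApplyInnerSelf x - T.reApplyInnerSelf x := by
  simp [reApplyInnerSelf_apply, inner_sub_left]

lemma reApplyInnerSelf_one (x : E) : (1 : E →L[𝕜] E).reApplyInnerSelf x = ‖x‖ ^ 2 := by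
  rw [reApplyInnerSelf_apply, one_apply_eq_self, inner_self_eq_norm_sq]

lemma reApplyInnerSelf_mono {S T : E →L[𝕜] E} (h : S ≤ T) (x : E) :
    S.reApplyInnerSelf x ≤ T.reApplyInnerSelf x :=
  sub_nonneg.mp (reApplyInnerSelf_sub T S x ▸ ((le_def S T).mp h).2 x)

lemma abs_reApplyInnerSelf_le (T : E →L[𝕜] E) (x : E) :
    |T.reApplyInnerSelf x| ≤ ‖T‖ * ‖x‖ ^ 2 :=
  calc |T.reApplyInnerSelf x| ≤ ‖inner 𝕜 (T x) x‖ := RCLike.abs_re_le_norm _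
    _ ≤ ‖T x‖ * ‖x‖ := norm_inner_le_norm _ _
    _ ≤ ‖T‖ * ‖x‖ * ‖x‖ := by gcongr; exact T.le_opNorm x
    _ = ‖T‖ * ‖x‖ ^ 2 := by ring

lemma norm_le_of_abs_reApplyInnerSelf_le {T : E →L[𝕜] E} (hT : T.IsSymmetric) {c : ℝ}
    (hc : 0 ≤ c) (h : ∀ x, |T.reApplyInnerSelf x| ≤ c * ‖x‖ ^ 2) : ‖T‖ ≤ c := by
  rw [T.norm_eq_iSup_rayleighQuotient hT]
  refine ciSup_le fun x => ?_
  rcases eq_or_ne x 0 with rfl | hx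
  · simpa using hc
  · rw [rayleighQuotient, abs_div, abs_of_nonneg (sq_nonneg ‖x‖),
      div_le_iff₀ (by positivity)]
    exact h x

variable [NormedSpace ℝ E] [IsScalarTower ℝ 𝕜 E]

lemma reApplyInnerSelf_real_smul (c : ℝ) (T : E →L[𝕜] E) (x : E) :
    (c • T).reApplyInnerSelf x = c * T.reApplyInnerSelf x := by
  rw [reApplyInnerSelf_apply, smul_apply, RCLike.real_smul_eq_coe_smul (K := 𝕜),
    inner_smul_real_left, RCLike.smul_re, reApplyInnerSelf_apply]

end ContinuousLinearMap

section Operator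

open ContinuousLinearMap

variable {𝕜 : Type*} [RCLike 𝕜] {E : Type*} [NormedAddCommGroup E] [InnerProductSpace 𝕜 E]
  [NormedSpace ℝ E] [IsScalarTower ℝ 𝕜 E]
  {V : Type*} [NormedAddCommGroup V] [NormedSpace ℝ V] {F : V → E →L[𝕜] E}

lemma ConcaveOn.reApplyInnerSelf {s : Set V} (hF : ConcaveOn ℝ s F) (x : E) :
    ConcaveOn ℝ s fun y => (F y).reApplyInnerSelf x := by
  refine ⟨hF.1, fun y hy z hz a b ha hb hab => ?_⟩
  have := reApplyInnerSelf_mono (hF.2 hy hz ha hb hab) x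
  rwa [reApplyInnerSelf_add, reApplyInnerSelf_real_smul, reApplyInnerSelf_real_smul] at this

theorem ConcaveOn.lipschitzOnWith_of_smul_one_le {x₀ : V} {r m ε : ℝ}
    (hF : ConcaveOn ℝ (ball x₀ r) F) (hm : ∀ y ∈ ball x₀ r, m • (1 : E →L[𝕜] E) ≤ F y)
    (hε : 0 < ε) :
    LipschitzOnWith (2 * (2 * ‖F x₀‖ + |m|) / ε).toNNReal F (ball x₀ (r - ε)) := by
  have hsub : ball x₀ (r - ε) ⊆ ball x₀ r := ball_subset_ball (by linarith)
  have hsymm : ∀ y ∈ ball x₀ r, (F y - m • (1 : E →L[𝕜] E)).IsSymmetric := fun y hy =>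
    ((le_def _ _).mp (hm y hy)).isSymmetric
  refine .of_dist_le' fun y hy z hz => ?_
  rw [dist_eq_norm, dist_eq_norm]
  refine norm_le_of_abs_reApplyInnerSelf_le ?_ (by positivity) fun x => ?_
  · simpa using (hsymm y (hsub hy)).sub (hsymm z (hsub hz))
  have hlow : ∀ y ∈ ball x₀ r, m * ‖x‖ ^ 2 ≤ (F y).reApplyInnerSelf x := fun y hy => by
    simpa [reApplyInnerSelf_real_smul, reApplyInnerSelf_one] using
      reApplyInnerSelf_mono (hm y hy) x
  have hbound : ∀ a, dist a x₀ < r →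
      |(F a).reApplyInnerSelf x| ≤ (2 * ‖F x₀‖ + |m|) * ‖x‖ ^ 2 := by
    intro a ha
    calc _ ≤ 2 * |(F x₀).reApplyInnerSelf x| + |m * ‖x‖ ^ 2| :=
          (hF.reApplyInnerSelf x).abs_le_of_forall_le hlow ha
      _ ≤ 2 * (‖F x₀‖ * ‖x‖ ^ 2) + |m| * ‖x‖ ^ 2 := by
          rw [abs_mul, abs_of_nonneg (sq_nonneg ‖x‖)]
          gcongr
          exact abs_reApplyInnerSelf_le _ _
      _ = _ := by ring
  have hlip :=
    ((hF.reApplyInnerSelf x).lipschitzOnWith_of_abs_le hε hbound).dist_le_mul y hy z hz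
  rw [Real.dist_eq, dist_eq_norm, Real.coe_toNNReal _ (by positivity)] at hlip
  rw [reApplyInnerSelf_sub]
  exact hlip.trans_eq (by ring)

end Operator

theorem operator_concave_locally_lipschitz_general
    {E : Type*} [NormedAddCommGroup E] [InnerProductSpace ℂ E]
    (k : ℕ) (U : Set (Fin k → (E →L[ℂ] E)))
    (F : (Fin k → (E →L[ℂ] E)) → (E →L[ℂ] E))
    (hconc : ∀ A ∈ U, ∀ B ∈ U, ∀ l : ℝ, 0 ≤ l → l ≤ 1 →
      (F ((1 - l) • A + l • B) - ((1 - l) • F A + l • F B)).IsPositive)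
    (hbelow : ∀ X ∈ U, ∃ ρ > 0, ball X ρ ⊆ U ∧ ∃ M : ℝ, ∀ Y ∈ ball X ρ,
      (F Y - M • (1 : E →L[ℂ] E)).IsPositive) :
    (∀ X ∈ U, ∃ r > 0, ∃ C : ℝ, 0 ≤ C ∧ ball X r ⊆ U ∧
      ∀ Y ∈ ball X r, ∀ Z ∈ ball X r, ‖F Y - F Z‖ ≤ C * ‖Y - Z‖) ∧
    ContinuousOn F U := by
  have hconcave : ∀ s ⊆ U, Convex ℝ s → ConcaveOn ℝ s F := by
    refine fun s hsU hs => ⟨hs, fun A hA B hB a b ha hb hab => ?_⟩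
    obtain rfl : a = 1 - b := by linarith
    exact (ContinuousLinearMap.le_def _ _).mpr (hconc A (hsU hA) B (hsU hB) b hb (by linarith))
  have hlocal : ∀ X ∈ U, ∃ r > 0, ball X r ⊆ U ∧ ∃ K, LipschitzOnWith K F (ball X r) := by
    intro X hX
    obtain ⟨ρ, hρ, hρU, M, hM⟩ := hbelow X hX
    have hlip := (hconcave _ hρU (convex_ball X ρ)).lipschitzOnWith_of_smul_one_le
      (fun Y hY => (ContinuousLinearMap.le_def _ _).mpr (hM Y hY)) (half_pos hρ)
    rw [sub_half] at hlip
    exact ⟨ρ / 2, half_pos hρ, (ball_subset_ball (half_le_self hρ.le)).trans hρU, _, hlip⟩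
  refine ⟨fun X hX => ?_, fun X hX => ?_⟩
  · obtain ⟨r, hr, hrU, K, hK⟩ := hlocal X hX
    exact ⟨r, hr, K, K.2, hrU, fun Y hY Z hZ => hK.norm_sub_le hY hZ⟩
  · obtain ⟨r, hr, -, K, hK⟩ := hlocal X hX
    exact (hK.continuousOn.continuousAt (ball_mem_nhds X hr)).continuousWithinAt

/-- An operator concave function from an open convex subset of `S(E)^k` into the
self-adjoint operators which is locally bounded from below is locally Lipschitz in the
operator norm; in particular it is norm continuous on its domain. -/
theorem operator_concave_locally_lipschitz
    {E : Type*} [NormedAddCommGroup E] [InnerProductSpace ℂ E] [CompleteSpace E]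
    (k : ℕ) (U : Set (Fin k → (E →L[ℂ] E))) (hUopen : IsOpen U) (hUconv : Convex ℝ U)
    (F : (Fin k → (E →L[ℂ] E)) → (E →L[ℂ] E))
    (hsa : ∀ X ∈ U, IsSelfAdjoint (F X))
    (hconc : ∀ A ∈ U, ∀ B ∈ U, ∀ l : ℝ, 0 ≤ l → l ≤ 1 →
      (F ((1 - l) • A + l • B) - ((1 - l) • F A + l • F B)).IsPositive)
    (hbelow : ∀ X ∈ U, ∃ ρ > 0, ball X ρ ⊆ U ∧ ∃ M : ℝ, ∀ Y ∈ ball X ρ,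
      (F Y - M • (1 : E →L[ℂ] E)).IsPositive) :
    (∀ X ∈ U, ∃ r > 0, ∃ C : ℝ, 0 ≤ C ∧ ball X r ⊆ U ∧
      ∀ Y ∈ ball X r, ∀ Z ∈ ball X r, ‖F Y - F Z‖ ≤ C * ‖Y - Z‖) ∧
    ContinuousOn F U :=
  operator_concave_locally_lipschitz_general k U F hconc hbelow
end

section
/- Let F : P_{2n}^k → S_{2n} be a 2n-monotone free function (respecting unitary conjugation and direct sums, and monotone with respect to the componentwise positive semidefinite order on 2n-by-2n matrices). Then the restriction of F to tuples of positive definite n-by-n matrices is n-concave: F(λA + (1-λ)B) ≥ λF(A) + (1-λ)F(B) for all A, B ∈ P_n^k and λ ∈ [0,1]. -/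
/-!
Conjugating `A ⊕ B` by the rotation `[[√l, -√(1-l)], [√(1-l), √l]]` gives a `2 × 2` block
matrix with top-left corner the convex combination `C = l A + (1-l) B`, and by freeness `G` of
it has top-left corner `l F(A) + (1-l) F(B)`. A Schur complement shows that this block matrix is
dominated by the block diagonal `((1+δ) C) ⊕ (…)`, so monotonicity gives
`l F(A) + (1-l) F(B) ≤ F((1+δ) C)`. Since `F` need not be continuous, the same device applied to
`C ⊕ 2C` and a rotation with sine `√ε` bounds `F((1+ε/2) C)` above by `F(C) + ε (F(2C) - F(C))`;
letting `ε → 0` in the Loewner order, which is closed, gives concavity.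
-/

open Matrix
open scoped ComplexOrder MatrixOrder

section BlockMatrices

variable {𝕜 m n : Type*} [RCLike 𝕜] [Fintype m] [Fintype n] [DecidableEq m]

omit [Fintype m] [DecidableEq m] in
lemma Matrix.PosDef.smul_add_one_sub_smul {A B : Matrix m m 𝕜} (hA : A.PosDef) (hB : B.PosDef)
    {l : ℝ} (hl0 : 0 ≤ l) (hl1 : l ≤ 1) : (l • A + (1 - l) • B).PosDef := by
  rcases hl0.lt_or_eq with hl | rfl
  · exact (hA.smul hl).add_posSemidef (hB.posSemidef.smul (sub_nonneg.mpr hl1))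
  · simpa using hB

lemma posDef_fromBlocks_zero [DecidableEq n] {A : Matrix m m 𝕜} {D : Matrix n n 𝕜}
    (hA : A.PosDef) (hD : D.PosDef) : (fromBlocks A 0 0 D).PosDef := by
  have := hA.isUnit.invertible
  have hpsd : (fromBlocks A 0 0 D).PosSemidef := by
    simpa using (hA.fromBlocks₁₁ (0 : Matrix m n 𝕜) D).mpr (by simpa using hD.posSemidef)
  rw [hpsd.posDef_iff_isUnit, isUnit_iff_isUnit_det, det_fromBlocks_zero₂₁]
  exact (isUnit_iff_isUnit_det _ |>.mp hA.isUnit).mul (isUnit_iff_isUnit_det _ |>.mp hD.isUnit)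

lemma posSemidef_fromBlocks_smul_schur {P : Matrix m m 𝕜} (hP : P.PosDef) (B : Matrix m n 𝕜)
    {t : ℝ} (ht : 0 < t) : (fromBlocks (t • P) B Bᴴ (t⁻¹ • (Bᴴ * P⁻¹ * B))).PosSemidef := by
  have hinv : (t • P)⁻¹ = t⁻¹ • P⁻¹ := by
    have := invertibleOfNonzero (RCLike.ofReal_ne_zero.mpr ht.ne' : (t : 𝕜) ≠ 0)
    simp only [RCLike.real_smul_eq_coe_smul (K := 𝕜)]
    rw [inv_smul _ _ (isUnit_iff_isUnit_det _ |>.mp hP.isUnit), invOf_eq_inv, RCLike.ofReal_inv]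
  have := (hP.smul ht).isUnit.invertible
  rw [(hP.smul ht).fromBlocks₁₁, hinv, Matrix.mul_smul, Matrix.smul_mul, sub_self]
  exact .zero

omit [Fintype m] [Fintype n] [DecidableEq m] in
lemma le_of_fromBlocks_le_fromBlocks {A A' : Matrix m m 𝕜} {B B' : Matrix m n 𝕜}
    {C C' : Matrix n m 𝕜} {D D' : Matrix n n 𝕜} (h : fromBlocks A B C D ≤ fromBlocks A' B' C' D') :
    A ≤ A' := by
  have : (toBlocks₁₁ (fromBlocks A' B' C' D' - fromBlocks A B C D)).PosSemidef :=
    (le_iff.mp h).submatrix Sum.inl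
  simpa [sub_eq_add_neg, fromBlocks_neg, fromBlocks_add, le_iff] using this

end BlockMatrices

lemma le_of_forall_le_add_smul {E : Type*} [AddCommGroup E] [Module ℝ E] [PartialOrder E]
    [TopologicalSpace E] [OrderClosedTopology E] [ContinuousAdd E] [ContinuousSMul ℝ E]
    {x y z : E} (h : ∀ ε ∈ Set.Ioo (0 : ℝ) 1, x ≤ y + ε • z) : x ≤ y := by
  have hlim : Filter.Tendsto (fun ε : ℝ => y + ε • z) (nhdsWithin 0 (Set.Ioi 0)) (nhds y) :=
    ((continuous_const.add (continuous_id.smul continuous_const)).tendsto' 0 y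
      (by simp)).mono_left nhdsWithin_le_nhds
  exact ge_of_tendsto hlim (Filter.mem_of_superset (Ioo_mem_nhdsGT zero_lt_one) h)

section BlockRotation

variable {m : Type*} [Fintype m] [DecidableEq m]

noncomputable def blockRotation (a b : ℝ) : Matrix (m ⊕ m) (m ⊕ m) ℂ :=
  fromBlocks (a • 1) (-b • 1) (b • 1) (a • 1)

omit [Fintype m] in
lemma star_blockRotation (a b : ℝ) :
    star (blockRotation a b : Matrix (m ⊕ m) (m ⊕ m) ℂ) =
      fromBlocks (a • 1) (b • 1) (-b • 1) (a • 1) := by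
  simp [blockRotation, star_eq_conjTranspose, fromBlocks_conjTranspose]

lemma star_blockRotation_mul_fromBlocks_mul_blockRotation (a b : ℝ) (P Q : Matrix m m ℂ) :
    star (blockRotation a b) * fromBlocks P 0 0 Q * blockRotation a b =
      fromBlocks (a ^ 2 • P + b ^ 2 • Q) ((a * b) • (Q - P)) ((a * b) • (Q - P))
        (b ^ 2 • P + a ^ 2 • Q) := by
  rw [star_blockRotation, blockRotation, fromBlocks_multiply, fromBlocks_multiply]
  congr 1 <;> simp only [Matrix.smul_mul, Matrix.mul_smul, Matrix.one_mul, Matrix.mul_one,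
    Matrix.mul_zero, add_zero, zero_add, smul_smul] <;> module

lemma blockRotation_mem_unitaryGroup {a b : ℝ} (h : a ^ 2 + b ^ 2 = 1) :
    (blockRotation a b : Matrix (m ⊕ m) (m ⊕ m) ℂ) ∈ unitaryGroup (m ⊕ m) ℂ := by
  have h' : b ^ 2 + a ^ 2 = 1 := by linarith
  have := star_blockRotation_mul_fromBlocks_mul_blockRotation (m := m) a b 1 1
  rwa [fromBlocks_one, Matrix.mul_one, sub_self, smul_zero, ← add_smul, ← add_smul, h, h',
    one_smul, fromBlocks_one, ← mem_unitaryGroup_iff'] at this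

lemma posDef_star_blockRotation_mul_fromBlocks_mul {a b : ℝ} (hab : a ^ 2 + b ^ 2 = 1)
    {P Q : Matrix m m ℂ} (hP : P.PosDef) (hQ : Q.PosDef) :
    (star (blockRotation a b) * fromBlocks P 0 0 Q * blockRotation a b).PosDef :=
  (Matrix.IsUnit.posDef_star_left_conjugate_iff
    (Unitary.isUnit_coe (U := ⟨_, blockRotation_mem_unitaryGroup hab⟩))).mpr
    (posDef_fromBlocks_zero hP hQ)

end BlockRotation

/-- A free function on `ι`-tuples of positive definite matrices, seen at size `m` (as `F`) and at
size `2m` (as `G`), which is monotone at size `2m`. -/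
structure IsMonotoneFreeDoubling {ι m : Type*} [Fintype m] [DecidableEq m]
    (F : (ι → Matrix m m ℂ) → Matrix m m ℂ)
    (G : (ι → Matrix (m ⊕ m) (m ⊕ m) ℂ) → Matrix (m ⊕ m) (m ⊕ m) ℂ) : Prop where
  map_unitary_conj : ∀ U ∈ unitaryGroup (m ⊕ m) ℂ, ∀ A : ι → Matrix (m ⊕ m) (m ⊕ m) ℂ,
    (∀ i, (A i).PosDef) → G (fun i => star U * A i * U) = star U * G A * U
  map_fromBlocks : ∀ A B : ι → Matrix m m ℂ, (∀ i, (A i).PosDef) → (∀ i, (B i).PosDef) →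
    G (fun i => fromBlocks (A i) 0 0 (B i)) = fromBlocks (F A) 0 0 (F B)
  monotone : ∀ A B : ι → Matrix (m ⊕ m) (m ⊕ m) ℂ, (∀ i, (A i).PosDef) → (∀ i, (B i).PosDef) →
    A ≤ B → G A ≤ G B

namespace IsMonotoneFreeDoubling

variable {ι m : Type*} [Fintype m] [DecidableEq m] {F : (ι → Matrix m m ℂ) → Matrix m m ℂ}
  {G : (ι → Matrix (m ⊕ m) (m ⊕ m) ℂ) → Matrix (m ⊕ m) (m ⊕ m) ℂ}

lemma map_star_blockRotation_mul_fromBlocks_mul (hG : IsMonotoneFreeDoubling F G) {a b : ℝ}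
    (hab : a ^ 2 + b ^ 2 = 1) {P Q : ι → Matrix m m ℂ} (hP : ∀ i, (P i).PosDef)
    (hQ : ∀ i, (Q i).PosDef) :
    G (fun i => star (blockRotation a b) * fromBlocks (P i) 0 0 (Q i) * blockRotation a b) =
      fromBlocks (a ^ 2 • F P + b ^ 2 • F Q) ((a * b) • (F Q - F P)) ((a * b) • (F Q - F P))
        (b ^ 2 • F P + a ^ 2 • F Q) := by
  rw [hG.map_unitary_conj _ (blockRotation_mem_unitaryGroup hab)
    (fun i => fromBlocks (P i) 0 0 (Q i)) (fun i => posDef_fromBlocks_zero (hP i) (hQ i)),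
    hG.map_fromBlocks P Q hP hQ, star_blockRotation_mul_fromBlocks_mul_blockRotation]

lemma rotate_le (hG : IsMonotoneFreeDoubling F G) {a b : ℝ} (hab : a ^ 2 + b ^ 2 = 1)
    {P Q Y Z : ι → Matrix m m ℂ} (hP : ∀ i, (P i).PosDef) (hQ : ∀ i, (Q i).PosDef)
    (hY : ∀ i, (Y i).PosDef) (hZ : ∀ i, (Z i).PosDef)
    (h : ∀ i, star (blockRotation a b) * fromBlocks (P i) 0 0 (Q i) * blockRotation a b ≤
      fromBlocks (Y i) 0 0 (Z i)) :
    a ^ 2 • F P + b ^ 2 • F Q ≤ F Y := by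
  have := hG.monotone _ _
    (fun i => posDef_star_blockRotation_mul_fromBlocks_mul hab (hP i) (hQ i))
    (fun i => posDef_fromBlocks_zero (hY i) (hZ i)) h
  rw [hG.map_star_blockRotation_mul_fromBlocks_mul hab hP hQ, hG.map_fromBlocks Y Z hY hZ] at this
  exact le_of_fromBlocks_le_fromBlocks this

lemma le_rotate (hG : IsMonotoneFreeDoubling F G) {a b : ℝ} (hab : a ^ 2 + b ^ 2 = 1)
    {P Q Y Z : ι → Matrix m m ℂ} (hP : ∀ i, (P i).PosDef) (hQ : ∀ i, (Q i).PosDef)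
    (hY : ∀ i, (Y i).PosDef) (hZ : ∀ i, (Z i).PosDef)
    (h : ∀ i, fromBlocks (Y i) 0 0 (Z i) ≤
      star (blockRotation a b) * fromBlocks (P i) 0 0 (Q i) * blockRotation a b) :
    F Y ≤ a ^ 2 • F P + b ^ 2 • F Q := by
  have := hG.monotone _ _ (fun i => posDef_fromBlocks_zero (hY i) (hZ i))
    (fun i => posDef_star_blockRotation_mul_fromBlocks_mul hab (hP i) (hQ i)) h
  rw [hG.map_star_blockRotation_mul_fromBlocks_mul hab hP hQ, hG.map_fromBlocks Y Z hY hZ] at this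
  exact le_of_fromBlocks_le_fromBlocks this

lemma smul_add_one_sub_smul_le (hG : IsMonotoneFreeDoubling F G) {A B : ι → Matrix m m ℂ}
    (hA : ∀ i, (A i).PosDef) (hB : ∀ i, (B i).PosDef) {l : ℝ} (hl0 : 0 ≤ l) (hl1 : l ≤ 1)
    {δ : ℝ} (hδ : 0 < δ) :
    l • F A + (1 - l) • F B ≤ F ((1 + δ) • (l • A + (1 - l) • B)) := by
  set C := l • A + (1 - l) • B
  have hC i : (C i).PosDef := (hA i).smul_add_one_sub_smul (hB i) hl0 hl1
  set D := fun i => (√l * √(1 - l)) • (B i - A i)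
  have hD i : (D i)ᴴ = D i := by
    simp only [D, conjTranspose_smul, conjTranspose_sub, (hA i).1.eq, (hB i).1.eq, star_trivial]
  have hE i : ((1 - l) • A i + l • B i).PosDef := by
    rw [add_comm]; exact (hB i).smul_add_one_sub_smul (hA i) hl0 hl1
  have hab : √l ^ 2 + √(1 - l) ^ 2 = 1 := by
    rw [Real.sq_sqrt hl0, Real.sq_sqrt (sub_nonneg.mpr hl1)]; ring
  have key := hG.rotate_le hab hA hB (Y := (1 + δ) • C)
    (Z := fun i => (1 - l) • A i + l • B i + δ⁻¹ • (D i * (C i)⁻¹ * D i))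
    (fun i => (hC i).smul (by positivity : (0 : ℝ) < 1 + δ))
    (fun i => (hE i).add_posSemidef ?_) (fun i => ?_)
  · rwa [Real.sq_sqrt hl0, Real.sq_sqrt (sub_nonneg.mpr hl1)] at key
  · simpa only [hD] using
      ((hC i).inv.posSemidef.conjTranspose_mul_mul_same (D i)).smul (inv_nonneg.mpr hδ.le)
  rw [star_blockRotation_mul_fromBlocks_mul_blockRotation, Real.sq_sqrt hl0,
    Real.sq_sqrt (sub_nonneg.mpr hl1), le_iff]
  convert posSemidef_fromBlocks_smul_schur (hC i) (-D i) hδ using 1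
  rw [conjTranspose_neg, hD, sub_eq_add_neg, fromBlocks_neg, fromBlocks_add]
  congr 1 <;>
    simp only [C, D, Pi.add_apply, Pi.smul_apply, zero_add, neg_mul, mul_neg, neg_neg] <;> module

lemma apply_one_add_half_smul_le (hG : IsMonotoneFreeDoubling F G) {C : ι → Matrix m m ℂ}
    (hC : ∀ i, (C i).PosDef) {ε : ℝ} (hε0 : 0 < ε) (hε1 : ε < 1) :
    F ((1 + ε / 2) • C) ≤ (1 - ε) • F C + ε • F ((2 : ℝ) • C) := by
  have hab : √(1 - ε) ^ 2 + √ε ^ 2 = 1 := by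
    rw [Real.sq_sqrt (by linarith), Real.sq_sqrt hε0.le]; ring
  have key := hG.le_rotate hab hC (Q := (2 : ℝ) • C) (Y := (1 + ε / 2) • C) (Z := ε • C)
    (fun i => (hC i).smul (two_pos : (0 : ℝ) < 2))
    (fun i => (hC i).smul (by positivity : (0 : ℝ) < 1 + ε / 2))
    (fun i => (hC i).smul hε0) (fun i => ?_)
  · rwa [Real.sq_sqrt (by linarith), Real.sq_sqrt hε0.le] at key
  rw [star_blockRotation_mul_fromBlocks_mul_blockRotation, Real.sq_sqrt (by linarith),
    Real.sq_sqrt hε0.le, le_iff]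
  convert posSemidef_fromBlocks_smul_schur (hC i) ((√(1 - ε) * √ε) • C i) (half_pos hε0) using 1
  have hs : (ε / 2)⁻¹ * (√(1 - ε) * √ε) * (√(1 - ε) * √ε) = 2 * (1 - ε) := by
    rw [mul_assoc, mul_mul_mul_comm, Real.mul_self_sqrt (by linarith),
      Real.mul_self_sqrt hε0.le]
    field_simp
  rw [conjTranspose_smul, star_trivial, (hC i).1.eq, Matrix.smul_mul, Matrix.mul_smul,
    Matrix.smul_mul, mul_nonsing_inv _ ((isUnit_iff_isUnit_det _).mp (hC i).isUnit), Matrix.one_mul,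
    smul_smul, smul_smul, hs, sub_eq_add_neg, fromBlocks_neg, fromBlocks_add]
  congr 1 <;> simp only [Pi.smul_apply, neg_zero, add_zero] <;> module

end IsMonotoneFreeDoubling

/-- A `2n`-monotone free function restricted to tuples of positive definite `n × n`
matrices is `n`-concave. Here `F` is the restriction of the free function to size `n`
and `G` its value on size-`2n` matrices (indexed by `Fin n ⊕ Fin n`); the free-function
properties (unitary invariance and respecting direct sums) and `2n`-monotonicity are
hypotheses. -/
theorem two_n_monotone_implies_n_concave (n k : ℕ)
    (F : (Fin k → Matrix (Fin n) (Fin n) ℂ) → Matrix (Fin n) (Fin n) ℂ)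
    (G : (Fin k → Matrix (Fin n ⊕ Fin n) (Fin n ⊕ Fin n) ℂ) →
      Matrix (Fin n ⊕ Fin n) (Fin n ⊕ Fin n) ℂ)
    -- `G` is invariant under simultaneous unitary conjugation
    (hunit : ∀ (U : Matrix (Fin n ⊕ Fin n) (Fin n ⊕ Fin n) ℂ),
      U ∈ Matrix.unitaryGroup (Fin n ⊕ Fin n) ℂ →
      ∀ A : Fin k → Matrix (Fin n ⊕ Fin n) (Fin n ⊕ Fin n) ℂ, (∀ i, (A i).PosDef) →
        G (fun i => star U * A i * U) = star U * G A * U)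
    -- the free function respects direct sums
    (hsum : ∀ (A B : Fin k → Matrix (Fin n) (Fin n) ℂ),
      (∀ i, (A i).PosDef) → (∀ i, (B i).PosDef) →
      G (fun i => Matrix.fromBlocks (A i) 0 0 (B i)) = Matrix.fromBlocks (F A) 0 0 (F B))
    -- `2n`-monotonicity
    (hmono : ∀ (A B : Fin k → Matrix (Fin n ⊕ Fin n) (Fin n ⊕ Fin n) ℂ),
      (∀ i, (A i).PosDef) → (∀ i, (B i).PosDef) → (∀ i, (B i - A i).PosSemidef) →
      (G B - G A).PosSemidef) :
    -- conclusion: `n`-concavity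
    ∀ (A B : Fin k → Matrix (Fin n) (Fin n) ℂ),
      (∀ i, (A i).PosDef) → (∀ i, (B i).PosDef) → ∀ l : ℝ, 0 ≤ l → l ≤ 1 →
      (F (fun i => (l : ℂ) • A i + ((1 - l : ℝ) : ℂ) • B i) -
        ((l : ℂ) • F A + ((1 - l : ℝ) : ℂ) • F B)).PosSemidef := by
  intro A B hA hB l hl0 hl1
  have hG : IsMonotoneFreeDoubling F G := ⟨hunit, hsum, hmono⟩
  set C := l • A + (1 - l) • B
  have hC i : (C i).PosDef := (hA i).smul_add_one_sub_smul (hB i) hl0 hl1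
  simp only [Complex.coe_smul]
  change l • F A + (1 - l) • F B ≤ F C
  open scoped Matrix.Norms.L2Operator in
  refine le_of_forall_le_add_smul (z := F ((2 : ℝ) • C) - F C) fun ε ⟨hε0, hε1⟩ => ?_
  calc l • F A + (1 - l) • F B ≤ F ((1 + ε / 2) • C) :=
        hG.smul_add_one_sub_smul_le hA hB hl0 hl1 (half_pos hε0)
    _ ≤ (1 - ε) • F C + ε • F ((2 : ℝ) • C) := hG.apply_one_add_half_smul_le hC hε0 hε1
    _ = F C + ε • (F ((2 : ℝ) • C) - F C) := by module
end

section
/- (Douglas' lemma) Let A and B be bounded linear operators on a Hilbert space H. The following are equivalent: (1) range(A) ⊆ range(B); (2) AA* ≤ λ²BB* for some λ ≥ 0; (3) there exists a bounded linear operator C with A = BC. -/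
/-!
(3) ⇒ (1) is trivial. For (1) ⇒ (3), `B` restricted to `(ker B)ᗮ` is injective with the same
range, so `C x`, the unique preimage there of `A x`, is linear, and it is bounded by the closed
graph theorem. Condition (2) says `‖A* x‖ ≤ λ ‖B* x‖`. Then for fixed `u` the functional
`B* x ↦ ⟪A u, x⟫` is well defined and bounded on `range B*`, so Hahn–Banach and Riesz give `v`
with `⟪B v, x⟫ = ⟪A u, x⟫` for all `x`, i.e. `A u = B v`; this yields (1), hence (3). Conversely,
`A = B C` gives `‖A* x‖ = ‖C* B* x‖ ≤ ‖C‖ ‖B* x‖`, which is (2) with `λ = ‖C‖`.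
-/

open InnerProductSpace
open scoped InnerProduct

namespace ContinuousLinearMap

variable {𝕜 E F G : Type*}

theorem exists_comp_eq_of_injective_of_range_subset [NontriviallyNormedField 𝕜]
    [NormedAddCommGroup E] [NormedSpace 𝕜 E] [CompleteSpace E]
    [NormedAddCommGroup F] [NormedSpace 𝕜 F] [CompleteSpace F]
    [NormedAddCommGroup G] [NormedSpace 𝕜 G] (A : E →L[𝕜] G) (B : F →L[𝕜] G)
    (hB : Function.Injective B) (h : Set.range A ⊆ Set.range B) :
    ∃ C : E →L[𝕜] F, A = B ∘L C := by
  have hA : ∀ x, A x ∈ LinearMap.range (B : F →ₗ[𝕜] G) := fun x => h ⟨x, rfl⟩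
  let C : E →ₗ[𝕜] F := (LinearEquiv.ofInjective (B : F →ₗ[𝕜] G) hB).symm.toLinearMap ∘ₗ
    (A : E →ₗ[𝕜] G).codRestrict _ hA
  have hBC : ∀ x, B (C x) = A x := fun x =>
    congrArg Subtype.val ((LinearEquiv.ofInjective (B : F →ₗ[𝕜] G) hB).apply_symm_apply _)
  -- if `uₙ → x` and `C uₙ → y`, then `B y = lim A uₙ = A x = B (C x)`
  have hC : Continuous C := C.continuous_of_seq_closed_graph fun u x y hu hCu => hB <|
    (tendsto_nhds_unique ((B.continuous.tendsto y).comp hCu)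
      (by simpa only [Function.comp_def, hBC] using (A.continuous.tendsto x).comp hu)).trans
      (hBC x).symm
  exact ⟨⟨C, hC⟩, ext fun x => (hBC x).symm⟩

theorem exists_comp_eq_of_range_subset [RCLike 𝕜] [NormedAddCommGroup E] [NormedSpace 𝕜 E]
    [CompleteSpace E] [NormedAddCommGroup F] [InnerProductSpace 𝕜 F] [CompleteSpace F]
    [NormedAddCommGroup G] [NormedSpace 𝕜 G] (A : E →L[𝕜] G) (B : F →L[𝕜] G)
    (h : Set.range A ⊆ Set.range B) : ∃ C : E →L[𝕜] F, A = B ∘L C := by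
  set K : Submodule 𝕜 F := LinearMap.ker (B : F →ₗ[𝕜] G)
  have hinj : Function.Injective (B ∘L Kᗮ.subtypeL) := by
    refine (injective_iff_map_eq_zero _).2 fun z hz => Subtype.ext ?_
    exact Submodule.disjoint_def.1 K.orthogonal_disjoint z hz z.2
  have hrange : Set.range B ⊆ Set.range (B ∘L Kᗮ.subtypeL) := by
    rintro _ ⟨x, rfl⟩
    obtain ⟨y, hy, z, hz, rfl⟩ := K.exists_add_mem_mem_orthogonal x
    have hBy : B y = 0 := hy
    exact ⟨⟨z, hz⟩, by simp [hBy]⟩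
  obtain ⟨C, hC⟩ := exists_comp_eq_of_injective_of_range_subset A _ hinj (h.trans hrange)
  exact ⟨Kᗮ.subtypeL ∘L C, hC⟩

end ContinuousLinearMap

theorem exists_inner_eq_of_norm_le {𝕜 E G : Type*} [RCLike 𝕜] [AddCommGroup E] [Module 𝕜 E]
    [NormedAddCommGroup G] [InnerProductSpace 𝕜 G] [CompleteSpace G]
    (T : E →ₗ[𝕜] G) (f : E →ₗ[𝕜] 𝕜) (c : ℝ) (hf : ∀ x, ‖f x‖ ≤ c * ‖T x‖) :
    ∃ v : G, ∀ x, f x = ⟪v, T x⟫_𝕜 := by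
  have hker : LinearMap.ker T ≤ LinearMap.ker f := fun x hx => by
    have := hf x
    rwa [LinearMap.mem_ker.1 hx, norm_zero, mul_zero, norm_le_zero_iff] at this
  let g : LinearMap.range T →ₗ[𝕜] 𝕜 :=
    (LinearMap.ker T).liftQ f hker ∘ₗ T.quotKerEquivRange.symm.toLinearMap
  have hg : ∀ x, g ⟨T x, LinearMap.mem_range_self T x⟩ = f x := fun x => by simp [g]
  have hgc : ∀ s, ‖g s‖ ≤ c * ‖s‖ := by
    rintro ⟨_, x, rfl⟩
    exact (hg x).symm ▸ hf x
  obtain ⟨g', hg', -⟩ := exists_extension_norm_eq (LinearMap.range T) (g.mkContinuous c hgc)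
  refine ⟨(toDual 𝕜 G).symm g', fun x => ?_⟩
  rw [toDual_symm_apply, ← hg x]
  exact (hg' _).symm

namespace ContinuousLinearMap

section RCLike

variable {𝕜 E F G : Type*} [RCLike 𝕜] [NormedAddCommGroup E] [InnerProductSpace 𝕜 E]
  [CompleteSpace E] [NormedAddCommGroup F] [InnerProductSpace 𝕜 F] [CompleteSpace F]
  [NormedAddCommGroup G] [InnerProductSpace 𝕜 G] [CompleteSpace G]

theorem range_subset_range_of_norm_adjoint_le (A : F →L[𝕜] E) (B : G →L[𝕜] E) (l : ℝ)
    (h : ∀ x, ‖(A†) x‖ ≤ l * ‖(B†) x‖) : Set.range A ⊆ Set.range B := by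
  rintro _ ⟨u, rfl⟩
  obtain ⟨v, hv⟩ := exists_inner_eq_of_norm_le (B† : E →ₗ[𝕜] G) (innerₛₗ 𝕜 (A u)) (l * ‖u‖)
    fun x => calc
      ‖⟪A u, x⟫_𝕜‖ = ‖⟪u, (A†) x⟫_𝕜‖ := by rw [adjoint_inner_right]
      _ ≤ ‖u‖ * (l * ‖(B†) x‖) := (norm_inner_le_norm _ _).trans (by gcongr; exact h x)
      _ = l * ‖u‖ * ‖(B†) x‖ := by ring
  exact ⟨v, ext_inner_right 𝕜 fun x => by rw [← adjoint_inner_right]; exact (hv x).symm⟩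

theorem reApplyInnerSelf_comp_adjoint (T : F →L[𝕜] E) (x : E) :
    (T ∘L T†).reApplyInnerSelf x = ‖(T†) x‖ ^ 2 := by
  rw [reApplyInnerSelf_apply, comp_apply, ← adjoint_inner_right, inner_self_eq_norm_sq]

end RCLike

variable {E F G : Type*} [NormedAddCommGroup E] [InnerProductSpace ℂ E] [CompleteSpace E]
  [NormedAddCommGroup F] [InnerProductSpace ℂ F] [CompleteSpace F]
  [NormedAddCommGroup G] [InnerProductSpace ℂ G] [CompleteSpace G]

theorem isPositive_smul_comp_adjoint_sub_iff (A : F →L[ℂ] E) (B : G →L[ℂ] E) {l : ℝ}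
    (hl : 0 ≤ l) : ((l ^ 2 : ℝ) • (B ∘L B†) - A ∘L A†).IsPositive ↔
      ∀ x, ‖(A†) x‖ ≤ l * ‖(B†) x‖ := by
  have hsa : IsSelfAdjoint ((l ^ 2 : ℝ) • (B ∘L B†) - A ∘L A†) :=
    ((IsSelfAdjoint.all (l ^ 2 : ℝ)).smul (isPositive_self_comp_adjoint B).isSelfAdjoint).sub
      (isPositive_self_comp_adjoint A).isSelfAdjoint
  have hre : ∀ x, ((l ^ 2 : ℝ) • (B ∘L B†) - A ∘L A†).reApplyInnerSelf x =
      (l * ‖(B†) x‖) ^ 2 - ‖(A†) x‖ ^ 2 := fun x => by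
    rw [mul_pow, ← reApplyInnerSelf_comp_adjoint, ← reApplyInnerSelf_comp_adjoint]
    simp only [reApplyInnerSelf_apply, sub_apply, smul_apply, inner_sub_left, map_sub,
      RCLike.real_smul_eq_coe_smul (K := ℂ), inner_smul_left, RCLike.conj_ofReal,
      RCLike.re_ofReal_mul]
  simp only [isPositive_def', hsa, true_and, hre, sub_nonneg]
  exact forall_congr' fun x => pow_le_pow_iff_left₀ (norm_nonneg _)
    (mul_nonneg hl (norm_nonneg _)) two_ne_zero

end ContinuousLinearMap

/-- **Douglas' lemma.** For bounded operators `A`, `B` on a Hilbert space `H`, the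
following are equivalent: (1) `range A ⊆ range B`; (2) `A A* ≤ λ² B B*` for some `λ ≥ 0`;
(3) `A = B C` for some bounded operator `C`. -/
theorem douglas_lemma
    {H : Type*} [NormedAddCommGroup H] [InnerProductSpace ℂ H] [CompleteSpace H]
    (A B : H →L[ℂ] H) :
    (Set.range A ⊆ Set.range B ↔
      ∃ C : H →L[ℂ] H, A = B.comp C) ∧
    ((∃ l : ℝ, 0 ≤ l ∧
        ((l ^ 2 : ℝ) • (B.comp (ContinuousLinearMap.adjoint B)) -
          A.comp (ContinuousLinearMap.adjoint A)).IsPositive) ↔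
      ∃ C : H →L[ℂ] H, A = B.comp C) := by
  have range_subset_of_factor : (∃ C : H →L[ℂ] H, A = B ∘L C) → Set.range A ⊆ Set.range B := by
    rintro ⟨C, rfl⟩
    exact Set.range_comp_subset_range C B
  refine ⟨⟨A.exists_comp_eq_of_range_subset B, range_subset_of_factor⟩, ?_, ?_⟩
  · rintro ⟨l, hl, hpos⟩
    exact A.exists_comp_eq_of_range_subset B <| A.range_subset_range_of_norm_adjoint_le B l <|
      (A.isPositive_smul_comp_adjoint_sub_iff B hl).1 hpos
  · rintro ⟨C, rfl⟩
    refine ⟨‖C‖, norm_nonneg C, ((B ∘L C).isPositive_smul_comp_adjoint_sub_iff B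
      (norm_nonneg C)).2 fun x => ?_⟩
    rw [ContinuousLinearMap.adjoint_comp, ContinuousLinearMap.comp_apply]
    exact (ContinuousLinearMap.le_opNorm _ _).trans_eq (by rw [LinearIsometryEquiv.norm_map])
end

section
/- Let A = [[A₁₁, A₁₂],[A₂₁, A₂₂]] be a bounded block operator matrix on H₁ ⊕ H₂ with nonnegative imaginary part, i.e. (A - A*)/(2i) ≥ 0, and suppose A₁₁ is boundedly invertible. Then the Schur complement S(A) = A₂₂ - A₂₁A₁₁⁻¹A₁₂ also has nonnegative imaginary part. Similarly, if the real part (A + A*)/2 ≥ 0, then the real part of S(A) is ≥ 0. -/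
open ContinuousLinearMap

variable {H₁ H₂ : Type}

/-- The block operator `[[A₁₁, A₁₂],[A₂₁, A₂₂]]` on the Hilbert space direct sum
`H₁ ⊕₂ H₂ = WithLp 2 (H₁ × H₂)`. -/
noncomputable def blockCLM [NormedAddCommGroup H₁] [InnerProductSpace ℂ H₁] [CompleteSpace H₁]
    [NormedAddCommGroup H₂] [InnerProductSpace ℂ H₂] [CompleteSpace H₂]
    (A11 : H₁ →L[ℂ] H₁) (A12 : H₂ →L[ℂ] H₁) (A21 : H₁ →L[ℂ] H₂) (A22 : H₂ →L[ℂ] H₂) :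
    WithLp 2 (H₁ × H₂) →L[ℂ] WithLp 2 (H₁ × H₂) :=
  ((WithLp.prodContinuousLinearEquiv 2 ℂ H₁ H₂).symm.toContinuousLinearMap).comp
    ((((A11.comp (fst ℂ H₁ H₂) + A12.comp (snd ℂ H₁ H₂))).prod
        ((A21.comp (fst ℂ H₁ H₂) + A22.comp (snd ℂ H₁ H₂)))).comp
      (WithLp.prodContinuousLinearEquiv 2 ℂ H₁ H₂).toContinuousLinearMap)

/-- The imaginary part `(T - T*)/(2i)` of a bounded operator. -/
noncomputable def imCLM {H : Type} [NormedAddCommGroup H] [InnerProductSpace ℂ H]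
    [CompleteSpace H] (T : H →L[ℂ] H) : H →L[ℂ] H :=
  (2 * Complex.I)⁻¹ • (T - adjoint T)

/-- The real part `(T + T*)/2` of a bounded operator. -/
noncomputable def reCLM {H : Type} [NormedAddCommGroup H] [InnerProductSpace ℂ H]
    [CompleteSpace H] (T : H →L[ℂ] H) : H →L[ℂ] H :=
  (2 : ℂ)⁻¹ • (T + adjoint T)

/-! For `v = (-A₁₁⁻¹A₁₂x) ⊕ x` the block operator gives `A v = 0 ⊕ S(A) x`, so the quadratic form
of `A` at `v` equals that of `S(A)` at `x`. The quadratic forms of `Re T` and `Im T` are the real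
and imaginary parts of that of `T`, so nonnegativity passes from `A` to `S(A)`. -/

open scoped InnerProductSpace

section RealImaginaryParts

variable {H : Type} [NormedAddCommGroup H] [InnerProductSpace ℂ H] [CompleteSpace H]

lemma isSelfAdjoint_imCLM (T : H →L[ℂ] H) : IsSelfAdjoint (imCLM T) := by
  have hconj : starRingEnd ℂ (2 * Complex.I)⁻¹ = -(2 * Complex.I)⁻¹ := by simp [map_ofNat]
  rw [isSelfAdjoint_iff', imCLM, map_smulₛₗ, map_sub, adjoint_adjoint, hconj, neg_smul,
    ← smul_neg, neg_sub]

lemma isSelfAdjoint_reCLM (T : H →L[ℂ] H) : IsSelfAdjoint (reCLM T) := by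
  rw [isSelfAdjoint_iff', reCLM, map_smulₛₗ, map_add, adjoint_adjoint, add_comm]
  simp [map_ofNat]

-- `⟪·, ·⟫_ℂ` is conjugate-linear in its first argument, which fixes the order `⟪x, T x⟫` here.
lemma re_inner_imCLM_apply_self (T : H →L[ℂ] H) (x : H) :
    (⟪imCLM T x, x⟫_ℂ).re = (⟪x, T x⟫_ℂ).im := by
  rw [imCLM, smul_apply, inner_smul_left, sub_apply, inner_sub_left, adjoint_inner_left]
  have hsymm : (⟪T x, x⟫_ℂ).im = -(⟪x, T x⟫_ℂ).im := inner_im_symm (𝕜 := ℂ) _ _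
  simp [Complex.mul_re, hsymm]
  ring

lemma re_inner_reCLM_apply_self (T : H →L[ℂ] H) (x : H) :
    (⟪reCLM T x, x⟫_ℂ).re = (⟪T x, x⟫_ℂ).re := by
  rw [reCLM, smul_apply, inner_smul_left, add_apply, inner_add_left, adjoint_inner_left]
  have hsymm : (⟪x, T x⟫_ℂ).re = (⟪T x, x⟫_ℂ).re := inner_re_symm (𝕜 := ℂ) _ _
  simp [Complex.mul_re, hsymm]
  ring

theorem isPositive_imCLM_iff (T : H →L[ℂ] H) :
    (imCLM T).IsPositive ↔ ∀ x, 0 ≤ (⟪x, T x⟫_ℂ).im := by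
  simp only [isPositive_def', isSelfAdjoint_imCLM, true_and, reApplyInnerSelf,
    RCLike.re_to_complex, re_inner_imCLM_apply_self]

theorem isPositive_reCLM_iff (T : H →L[ℂ] H) :
    (reCLM T).IsPositive ↔ ∀ x, 0 ≤ (⟪T x, x⟫_ℂ).re := by
  simp only [isPositive_def', isSelfAdjoint_reCLM, true_and, reApplyInnerSelf,
    RCLike.re_to_complex, re_inner_reCLM_apply_self]

end RealImaginaryParts

section BlockOperators

variable [NormedAddCommGroup H₁] [InnerProductSpace ℂ H₁] [CompleteSpace H₁]
  [NormedAddCommGroup H₂] [InnerProductSpace ℂ H₂] [CompleteSpace H₂]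

@[simp]
lemma blockCLM_apply (A11 : H₁ →L[ℂ] H₁) (A12 : H₂ →L[ℂ] H₁) (A21 : H₁ →L[ℂ] H₂)
    (A22 : H₂ →L[ℂ] H₂) (x : WithLp 2 (H₁ × H₂)) :
    blockCLM A11 A12 A21 A22 x =
      WithLp.toLp 2 (A11 x.fst + A12 x.snd, A21 x.fst + A22 x.snd) :=
  rfl

lemma blockCLM_apply_schur {A11 A11inv : H₁ →L[ℂ] H₁} (hA11 : A11.comp A11inv = 1)
    (A12 : H₂ →L[ℂ] H₁) (A21 : H₁ →L[ℂ] H₂) (A22 : H₂ →L[ℂ] H₂) (x : H₂) :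
    blockCLM A11 A12 A21 A22 (WithLp.toLp 2 (-(A11inv (A12 x)), x)) =
      WithLp.toLp 2 (0, (A22 - A21.comp (A11inv.comp A12)) x) := by
  have hinv : A11 (A11inv (A12 x)) = A12 x := congr($hA11 (A12 x))
  simp [hinv, sub_eq_neg_add]

end BlockOperators

theorem schur_complement_im_re_nonneg_general
    [NormedAddCommGroup H₁] [InnerProductSpace ℂ H₁] [CompleteSpace H₁]
    [NormedAddCommGroup H₂] [InnerProductSpace ℂ H₂] [CompleteSpace H₂]
    (A11 : H₁ →L[ℂ] H₁) (A12 : H₂ →L[ℂ] H₁) (A21 : H₁ →L[ℂ] H₂) (A22 : H₂ →L[ℂ] H₂)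
    (A11inv : H₁ →L[ℂ] H₁) (h1 : A11.comp A11inv = 1) :
    ((imCLM (blockCLM A11 A12 A21 A22)).IsPositive →
      (imCLM (A22 - (A21.comp (A11inv.comp A12)))).IsPositive) ∧
    ((reCLM (blockCLM A11 A12 A21 A22)).IsPositive →
      (reCLM (A22 - (A21.comp (A11inv.comp A12)))).IsPositive) := by
  simp only [isPositive_imCLM_iff, isPositive_reCLM_iff]
  constructor <;>
  · intro hA x
    simpa only [blockCLM_apply_schur h1, WithLp.prod_inner_apply, inner_zero_left,
      inner_zero_right, zero_add] using hA (WithLp.toLp 2 (-(A11inv (A12 x)), x))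

/-- If a block operator `A = [[A₁₁,A₁₂],[A₂₁,A₂₂]]` has nonnegative imaginary part and
`A₁₁` is boundedly invertible, then the Schur complement `S(A) = A₂₂ - A₂₁ A₁₁⁻¹ A₁₂` has
nonnegative imaginary part; similarly for real parts. -/
theorem schur_complement_im_re_nonneg
    [NormedAddCommGroup H₁] [InnerProductSpace ℂ H₁] [CompleteSpace H₁]
    [NormedAddCommGroup H₂] [InnerProductSpace ℂ H₂] [CompleteSpace H₂]
    (A11 : H₁ →L[ℂ] H₁) (A12 : H₂ →L[ℂ] H₁) (A21 : H₁ →L[ℂ] H₂) (A22 : H₂ →L[ℂ] H₂)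
    (A11inv : H₁ →L[ℂ] H₁) (h1 : A11.comp A11inv = 1) (h2 : A11inv.comp A11 = 1) :
    ((imCLM (blockCLM A11 A12 A21 A22)).IsPositive →
      (imCLM (A22 - (A21.comp (A11inv.comp A12)))).IsPositive) ∧
    ((reCLM (blockCLM A11 A12 A21 A22)).IsPositive →
      (reCLM (A22 - (A21.comp (A11inv.comp A12)))).IsPositive) :=
  schur_complement_im_re_nonneg_general A11 A12 A21 A22 A11inv h1
end

section
/- Let F be a Fréchet-differentiable free function on k-tuples of positive definite operators with values in self-adjoint operators. Then F is operator monotone if and only if its Fréchet derivative satisfies DF(X)(H) ≥ 0 for every X in the domain and every tuple H ≥ 0 of positive semi-definite self-adjoint operators. -/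
open scoped InnerProductSpace

/-- A positive definite (boundedly invertible positive) operator. -/
def IsPosDefCLM {E : Type*} [NormedAddCommGroup E] [InnerProductSpace ℂ E] [CompleteSpace E]
    (A : E →L[ℂ] E) : Prop :=
  A.IsPositive ∧ ∃ c : ℝ, 0 < c ∧ ∀ x : E, c * ‖x‖ ^ 2 ≤ (⟪A x, x⟫_ℂ).re

/-!
Positivity of operators is the Loewner order `0 ≤ A`, whose cone is closed in the norm topology.
If `F` is monotone, `DF(X)(H)` is the limit as `t → 0⁺` of `t⁻¹ • (F (X + t • H) - F X) ≥ 0`,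
hence `≥ 0`. Conversely, for a fixed vector `x` the real function `Z ↦ re ⟪F(Z) x, x⟫` on the
convex set of positive definite tuples has, by the mean value theorem, an increment from `Y` to
`X` equal to `re ⟪DF(Z)(X - Y) x, x⟫ ≥ 0` for some `Z` on the segment.
-/

open ContinuousLinearMap

section

variable {E : Type*} [NormedAddCommGroup E] [InnerProductSpace ℂ E]

noncomputable def reApplyInnerSelfCLM (x : E) : (E →L[ℂ] E) →L[ℝ] ℝ :=
  Complex.reCLM ∘L ((innerSL ℂ x).restrictScalars ℝ ∘L (apply ℂ E x).restrictScalars ℝ)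

@[simp]
lemma reApplyInnerSelfCLM_apply (x : E) (A : E →L[ℂ] E) :
    reApplyInnerSelfCLM x A = (⟪A x, x⟫_ℂ).re :=
  inner_re_symm (𝕜 := ℂ) x (A x)

variable [CompleteSpace E]

lemma isPositive_real_smul {A : E →L[ℂ] E} (hA : A.IsPositive) {t : ℝ} (ht : 0 ≤ t) :
    (t • A).IsPositive := by
  rw [← nonneg_iff_isPositive] at hA ⊢
  exact smul_nonneg ht hA

lemma IsPosDefCLM.add_isPositive {A B : E →L[ℂ] E} (hA : IsPosDefCLM A) (hB : B.IsPositive) :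
    IsPosDefCLM (A + B) := by
  obtain ⟨hApos, c, hc, hcA⟩ := hA
  refine ⟨hApos.add hB, c, hc, fun x => ?_⟩
  have hsplit : (⟪(A + B) x, x⟫_ℂ).re = (⟪A x, x⟫_ℂ).re + (⟪B x, x⟫_ℂ).re := by simp
  have hBx : 0 ≤ (⟪B x, x⟫_ℂ).re := hB.re_inner_nonneg_left x
  rw [hsplit]
  linarith [hcA x]

lemma convex_setOf_isPosDefCLM : Convex ℝ {A : E →L[ℂ] E | IsPosDefCLM A} := by
  rintro A ⟨hA, c, hc, hcA⟩ B ⟨hB, d, hd, hdB⟩ a b ha hb hab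
  refine ⟨(isPositive_real_smul hA ha).add (isPositive_real_smul hB hb), a * c + b * d,
    by nlinarith [mul_le_mul_of_nonneg_left (min_le_left c d) ha,
      mul_le_mul_of_nonneg_left (min_le_right c d) hb, lt_min hc hd], fun x => ?_⟩
  have hsplit : (⟪(a • A + b • B) x, x⟫_ℂ).re =
      a * (⟪A x, x⟫_ℂ).re + b * (⟪B x, x⟫_ℂ).re := by simp
  rw [hsplit]
  nlinarith [hcA x, hdB x]

variable {V : Type*} [NormedAddCommGroup V] [NormedSpace ℝ V]

theorem HasFDerivAt.isPositive_apply_of_isPositive_sub {F : V → E →L[ℂ] E}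
    {F' : V →L[ℝ] E →L[ℂ] E} {X : V} (hF : HasFDerivAt F F' X) {H : V}
    (hmono : ∀ t : ℝ, 0 < t → (F (X + t • H) - F X).IsPositive) : (F' H).IsPositive := by
  rw [← nonneg_iff_isPositive]
  refine ge_of_tendsto (hF.hasLineDerivAt H).tendsto_slope_zero_right ?_
  filter_upwards [self_mem_nhdsWithin] with t ht
  exact (nonneg_iff_isPositive _).2 (isPositive_real_smul (hmono t ht) (inv_nonneg.2 ht.le))

theorem Convex.isPositive_sub_of_isPositive_fderiv {s : Set V} (hs : Convex ℝ s)
    {F : V → E →L[ℂ] E} {F' : V → V →L[ℝ] E →L[ℂ] E} (hF : ∀ Z ∈ s, HasFDerivAt F (F' Z) Z)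
    {X Y : V} (hX : X ∈ s) (hY : Y ∈ s) (hsa : IsSelfAdjoint (F X - F Y))
    (hF' : ∀ Z ∈ s, (F' Z (X - Y)).IsPositive) : (F X - F Y).IsPositive := by
  refine ⟨hsa.isSymmetric, fun x => ?_⟩
  set φ := reApplyInnerSelfCLM x
  obtain ⟨Z, hZ, hmvt⟩ := domain_mvt (f := φ ∘ F) (f' := fun Z => φ ∘L F' Z)
    (fun Z hZ => (φ.hasFDerivAt.comp Z (hF Z hZ)).hasFDerivWithinAt) hs hY hX
  have hincrement : (F X - F Y).reApplyInnerSelf x = φ (F' Z (X - Y)) := by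
    simpa [φ, reApplyInnerSelf_apply, inner_sub_left] using hmvt
  rw [hincrement, reApplyInnerSelfCLM_apply]
  exact (hF' Z (hs.segment_subset hY hX hZ)).re_inner_nonneg_left x

end

/-- A Fréchet-differentiable free function on tuples of positive definite operators is
operator monotone if and only if its Fréchet derivative `DF(X)(H)` is positive
semi-definite for every `X` in the domain and every tuple `H ≥ 0`. -/
theorem operator_monotone_iff_derivative_nonneg
    {E : Type*} [NormedAddCommGroup E] [InnerProductSpace ℂ E] [CompleteSpace E]
    (k : ℕ) (F : (Fin k → (E →L[ℂ] E)) → (E →L[ℂ] E))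
    (hsa : ∀ X : Fin k → (E →L[ℂ] E), (∀ i, IsPosDefCLM (X i)) → IsSelfAdjoint (F X))
    (DF : (Fin k → (E →L[ℂ] E)) → ((Fin k → (E →L[ℂ] E)) →L[ℝ] (E →L[ℂ] E)))
    (hdiff : ∀ X : Fin k → (E →L[ℂ] E), (∀ i, IsPosDefCLM (X i)) →
      HasFDerivAt (𝕜 := ℝ) F (DF X) X) :
    (∀ X Y : Fin k → (E →L[ℂ] E), (∀ i, IsPosDefCLM (X i)) → (∀ i, IsPosDefCLM (Y i)) →
        (∀ i, (X i - Y i).IsPositive) → (F X - F Y).IsPositive) ↔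
    (∀ X : Fin k → (E →L[ℂ] E), (∀ i, IsPosDefCLM (X i)) →
      ∀ H : Fin k → (E →L[ℂ] E), (∀ i, (H i).IsPositive) → (DF X H).IsPositive) := by
  constructor
  · intro hmono X hX H hH
    refine (hdiff X hX).isPositive_apply_of_isPositive_sub fun t ht => ?_
    have htH : ∀ i, (t • H i).IsPositive := fun i => isPositive_real_smul (hH i) ht.le
    exact hmono _ _ (fun i => (hX i).add_isPositive (htH i)) hX (by simpa using htH)
  · intro hder X Y hX hY hXY
    have hconv : Convex ℝ (Set.univ.pi fun _ : Fin k => {A : E →L[ℂ] E | IsPosDefCLM A}) :=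
      convex_pi fun _ _ => convex_setOf_isPosDefCLM
    exact hconv.isPositive_sub_of_isPositive_fderiv (fun Z hZ => hdiff Z (by simpa using hZ))
      (by simpa using hX) (by simpa using hY) ((hsa X hX).sub (hsa Y hY))
      fun Z hZ => hder Z (by simpa using hZ) _ hXY
end
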